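/- Let G be a finite simple graph on n vertices with maximum degree Δ ≥ 2. Then n ≤ cdim(G) + Δ^{cdim(G)}, and consequently log_Δ((n+1)/2) ≤ cdim(G). -/

import Mathlib

/-!
Fix a resolving set `B` with `k` elements and sort the vertices outside `B` by connected
component. Components disjoint from `B` contribute at most one vertex, since such vertices have
connectivity `0` to all of `B`. If a component `K` meets `B` in `s` vertices, the vertices of
`K \ B` have pairwise distinct connectivity vectors in `{1, …, Δ} ^ s`, and not all of these
vectors occur.

Indeed, if `κ(v, w) = Δ`, the `Δ` internally disjoint `v`–`w` paths pass through every
neighbour of `w`, so two internally disjoint `w`–`c` paths can be rerouted into two `v`–`c`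
paths: `κ(w, c) ≥ 2` forces `κ(v, c) ≥ 2`. For `s ≥ 2` this forbids the all-`Δ` vector and the
vector with `Δ` at `w` and `1` at `w'` to occur together. For `s = 1`, if all values occur
then `K` has `Δ + 1` vertices, so the second vertices of the `Δ` paths starting at the vertex
with value `Δ` exhaust `K`; the vertex with value `1` then lies inside one of these paths,
which makes its connectivity to `w` at least `2`.

Hence `|K \ B| ≤ Δ ^ s - 1`, and `1 + ∑ (Δ ^ s_K - 1) ≤ Δ ^ k`. The logarithmic bound follows
from `k < 2 ^ k ≤ Δ ^ k`.
-/

open SimpleGraph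

namespace ConnDim

open Classical in
/-- The local connectivity `κ(a,b)`: the maximum number of internally vertex-disjoint
`a`-`b` paths, with `κ(a,a) = ∞`. -/
noncomputable def localConn {V : Type*} (G : SimpleGraph V) (a b : V) : ℕ∞ :=
  if a = b then ⊤
  else sSup {n : ℕ∞ | ∃ Ps : Finset (G.Path a b),
    (∀ p ∈ Ps, ∀ q ∈ Ps, p ≠ q → ∀ x : V,
        x ∈ p.1.support → x ∈ q.1.support → x = a ∨ x = b) ∧
    (Ps.card : ℕ∞) = n}

/-- A set `W` is connectivity resolving if vertices are determined by their
local connectivities to the elements of `W`. -/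
def ConnResolving {V : Type*} (G : SimpleGraph V) (W : Set V) : Prop :=
  ∀ u v : V, (∀ w ∈ W, localConn G u w = localConn G v w) → u = v

/-- The connectivity dimension: minimum cardinality of a connectivity resolving set. -/
noncomputable def cdim {V : Type*} (G : SimpleGraph V) : ℕ :=
  sInf {n : ℕ | ∃ W : Set V, ConnResolving G W ∧ W.ncard = n}

/-- A set `W` is metric resolving if vertices are determined by their distances
to the elements of `W`. -/
def MetricResolving {V : Type*} (G : SimpleGraph V) (W : Set V) : Prop :=
  ∀ u v : V, (∀ w ∈ W, G.dist u w = G.dist v w) → u = v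

/-- The metric dimension: minimum cardinality of a metric resolving set. -/
noncomputable def mdim {V : Type*} (G : SimpleGraph V) : ℕ :=
  sInf {n : ℕ | ∃ W : Set V, MetricResolving G W ∧ W.ncard = n}

/-- `G` forces a `𝟙` representation if every minimum resolving set (basis) `B` admits a
vertex whose local connectivity to every element of `B` equals `1`. -/
def ForcesOne {V : Type*} (G : SimpleGraph V) : Prop :=
  ∀ B : Set V, ConnResolving G B → B.ncard = cdim G →
    ∃ v : V, ∀ b ∈ B, localConn G v b = 1

/-- A cut vertex of a connected graph: its removal disconnects the graph. -/
def IsCutVertex {V : Type*} (G : SimpleGraph V) (v : V) : Prop :=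
  G.Connected ∧ ¬ (G.induce {u : V | u ≠ v}).Connected

/-- A block of `G`: a maximal connected subgraph of `G` without a cut vertex of itself. -/
def IsBlock {V : Type*} (G : SimpleGraph V) (H : G.Subgraph) : Prop :=
  H.coe.Connected ∧ (∀ v, ¬ IsCutVertex H.coe v) ∧
  ∀ H' : G.Subgraph, H ≤ H' → H'.coe.Connected → (∀ v, ¬ IsCutVertex H'.coe v) → H' = H

/-- The number of blocks of `G`. -/
noncomputable def numBlocks {V : Type*} (G : SimpleGraph V) : ℕ :=
  Nat.card {H : G.Subgraph // IsBlock G H}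

/-- Two vertices are twins if they have the same neighborhood in the graph with
both of them deleted. -/
def AreTwins {V : Type*} (G : SimpleGraph V) (a b : V) : Prop :=
  ∀ x : V, x ≠ a → x ≠ b → (G.Adj a x ↔ G.Adj b x)

/-- The threshold graph generated by a binary sequence `L` (`false` = isolated vertex,
`true` = dominating vertex): two vertices are adjacent iff the later one was added
as a dominating vertex. -/
def thresholdGraph (L : List Bool) : SimpleGraph (Fin L.length) :=
  SimpleGraph.fromRel (fun i j => i < j ∧ L.get j = true)

/-- The alternating binary sequence `0,1,0,1,…,0,1` of length `2 * n`. -/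
def altList (n : ℕ) : List Bool := (List.replicate n [false, true]).flatten

/-- The join of two graphs on disjoint vertex sets by the bridge `v₁v₂`. -/
def bridgeJoin {V₁ V₂ : Type*} (G₁ : SimpleGraph V₁) (G₂ : SimpleGraph V₂)
    (v₁ : V₁) (v₂ : V₂) : SimpleGraph (V₁ ⊕ V₂) :=
  G₁.map Function.Embedding.inl ⊔ G₂.map Function.Embedding.inr
    ⊔ SimpleGraph.fromEdgeSet {s(Sum.inl v₁, Sum.inr v₂)}

/-- The graph obtained from `G` by attaching a new leaf (the vertex `none`) to `u`. -/
def attachLeaf {V : Type*} (G : SimpleGraph V) (u : V) : SimpleGraph (Option V) :=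
  G.map Function.Embedding.some ⊔ SimpleGraph.fromEdgeSet {s(some u, (none : Option V))}

/-- The chain of `t` triangles (triangle `i` has vertices `inl i.castSucc`, `inl i.succ`,
`inr (inl i)`), with a leaf `inr (inr ())` attached to the end vertex `inl 0`. -/
def triChain (t : ℕ) : SimpleGraph (Fin (t+1) ⊕ Fin t ⊕ Unit) :=
  SimpleGraph.fromRel (fun a b =>
    match a, b with
    | Sum.inl i, Sum.inl j => (i : ℕ) + 1 = (j : ℕ)
    | Sum.inr (Sum.inl i), Sum.inl j => j = Fin.castSucc i ∨ j = Fin.succ i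
    | Sum.inr (Sum.inr _), Sum.inl j => j = 0
    | _, _ => False)

end ConnDim

namespace SimpleGraph.Walk

variable {V : Type*} {G : SimpleGraph V} {a b c u v x y : V}

theorem IsPath.eq_of_mem_support_takeUntil_of_mem_support_dropUntil [DecidableEq V]
    {P : G.Walk a b} (hP : P.IsPath) (hx : x ∈ P.support)
    (h₁ : y ∈ (P.takeUntil x hx).support) (h₂ : y ∈ (P.dropUntil x hx).support) : y = x := by
  have hnodup : ((P.takeUntil x hx).support ++ (P.dropUntil x hx).support.tail).Nodup := by
    rw [← support_append, take_spec]
    exact hP.support_nodup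
  rw [← cons_tail_support (P.dropUntil x hx), List.mem_cons] at h₂
  exact h₂.resolve_right fun h => List.disjoint_of_nodup_append hnodup h₁ h

theorem mem_support_dropUntil_or [DecidableEq V] (P : G.Walk a b) (hx : x ∈ P.support)
    (hy : y ∈ P.support) : y ∈ (P.dropUntil x hx).support ∨ x ∈ (P.dropUntil y hy).support := by
  induction P with
  | nil =>
    rw [mem_support_nil_iff] at hx hy
    subst hx hy
    simp
  | @cons u _ _ h P ih =>
    by_cases hxu : u = x
    · subst hxu
      exact Or.inl (by rwa [dropUntil_first])
    by_cases hyu : u = y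
    · subst hyu
      exact Or.inr (by rwa [dropUntil_first])
    have hx' := (List.mem_cons.1 (support_cons h P ▸ hx)).resolve_left (Ne.symm hxu)
    have hy' := (List.mem_cons.1 (support_cons h P ▸ hy)).resolve_left (Ne.symm hyu)
    simpa [dropUntil, hxu, hyu] using ih hx' hy'

theorem exists_walk_support_subset_first_mem (W : G.Walk u v) {T : Set V} (hv : v ∈ T) :
    ∃ x ∈ T, ∃ W' : G.Walk u x, W'.support ⊆ W.support ∧ ∀ y ∈ W'.support, y ∈ T → y = x := by
  induction W with
  | nil => exact ⟨_, hv, nil, List.Subset.refl _, fun y hy _ => by simpa using hy⟩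
  | @cons u _ _ h W ih =>
    by_cases hu : u ∈ T
    · exact ⟨u, hu, nil, by simp, fun y hy _ => by simpa using hy⟩
    obtain ⟨x, hxT, W', hsub, hfirst⟩ := ih hv
    refine ⟨x, hxT, cons h W', ?_, ?_⟩
    · simpa using List.cons_subset_cons u hsub
    · rintro y hy hyT
      rcases List.mem_cons.1 (support_cons h W' ▸ hy) with rfl | hy
      · exact absurd hyT hu
      · exact hfirst y hy hyT

theorem mem_support_of_mk_mem_edges_takeUntil_append [DecidableEq V] {P : G.Walk a b}
    (hx : x ∈ P.support) (W : G.Walk c x) (hc : c ∉ P.support)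
    (h : s(a, c) ∈ ((P.takeUntil x hx).append W.reverse).edges) : a ∈ W.support := by
  rw [edges_append, List.mem_append, edges_reverse, List.mem_reverse] at h
  rcases h with h | h
  · exact absurd (P.support_takeUntil_subset_support hx (snd_mem_support_of_mem_edges _ h)) hc
  · exact fst_mem_support_of_mem_edges _ h

end SimpleGraph.Walk

theorem Finset.sum_add_one_le_prod_add_one {ι : Type*} (t : Finset ι) (y : ι → ℕ) :
    ∑ i ∈ t, y i + 1 ≤ ∏ i ∈ t, (y i + 1) := by
  classical
  induction t using Finset.induction_on with
  | empty => simp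
  | insert i t hi ih =>
    rw [Finset.sum_insert hi, Finset.prod_insert hi]
    have hprod : 1 ≤ ∏ j ∈ t, (y j + 1) := (Nat.le_add_left 1 _).trans ih
    nlinarith [Nat.mul_le_mul_left (y i) hprod]

theorem SimpleGraph.Path.reverse_injective {V : Type*} {G : SimpleGraph V} {a b : V} :
    Function.Injective (Path.reverse : G.Path a b → G.Path b a) := fun p q h =>
  Subtype.ext (by simpa using congrArg (fun r : G.Path b a => (r : G.Walk b a).reverse) h)

namespace ConnDim

section LocalConnectivity

variable {V : Type*} {G : SimpleGraph V} {a b : V}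

def IsInternallyDisjoint (S : Finset (G.Path a b)) : Prop :=
  ∀ p ∈ S, ∀ q ∈ S, p ≠ q → ∀ x ∈ (p : G.Walk a b).support,
    x ∈ (q : G.Walk a b).support → x = a ∨ x = b

theorem localConn_self (G : SimpleGraph V) (a : V) : localConn G a a = ⊤ :=
  if_pos rfl

theorem localConn_of_ne (hab : a ≠ b) :
    localConn G a b = sSup {n : ℕ∞ | ∃ S : Finset (G.Path a b),
      IsInternallyDisjoint S ∧ (S.card : ℕ∞) = n} :=
  if_neg hab

theorem natCast_lt_localConn_iff (hab : a ≠ b) (n : ℕ) :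
    (n : ℕ∞) < localConn G a b ↔
      ∃ S : Finset (G.Path a b), IsInternallyDisjoint S ∧ n < S.card := by
  simp only [localConn_of_ne hab, lt_sSup_iff, Set.mem_ofPred_eq]
  constructor
  · rintro ⟨_, ⟨S, hS, rfl⟩, h⟩
    exact ⟨S, hS, by exact_mod_cast h⟩
  · rintro ⟨S, hS, h⟩
    exact ⟨_, ⟨S, hS, rfl⟩, by exact_mod_cast h⟩

theorem natCast_le_localConn_iff (hab : a ≠ b) (n : ℕ) :
    (n : ℕ∞) ≤ localConn G a b ↔
      ∃ S : Finset (G.Path a b), IsInternallyDisjoint S ∧ n ≤ S.card := by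
  cases n with
  | zero => exact iff_of_true (by simp) ⟨∅, by simp [IsInternallyDisjoint]⟩
  | succ n =>
    rw [Nat.cast_succ, ENat.add_one_le_iff (ENat.natCast_ne_top n), natCast_lt_localConn_iff hab]
    rfl

theorem IsInternallyDisjoint.card_le_localConn {S : Finset (G.Path a b)}
    (hS : IsInternallyDisjoint S) (hab : a ≠ b) : (S.card : ℕ∞) ≤ localConn G a b :=
  (natCast_le_localConn_iff hab _).2 ⟨S, hS, le_rfl⟩

theorem two_le_localConn_iff (hab : a ≠ b) :
    2 ≤ localConn G a b ↔ ∃ p q : G.Path a b, p ≠ q ∧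
      ∀ x ∈ (p : G.Walk a b).support, x ∈ (q : G.Walk a b).support → x = a ∨ x = b := by
  classical
  rw [← Nat.cast_ofNat, natCast_le_localConn_iff hab]
  constructor
  · rintro ⟨S, hS, hcard⟩
    obtain ⟨p, hp, q, hq, hpq⟩ := Finset.one_lt_card.1 hcard
    exact ⟨p, q, hpq, hS p hp q hq hpq⟩
  · rintro ⟨p, q, hpq, hpq'⟩
    refine ⟨{p, q}, ?_, (Finset.card_pair hpq).ge⟩
    simp only [IsInternallyDisjoint, Finset.mem_insert, Finset.mem_singleton]
    rintro p' (rfl | rfl) q' (rfl | rfl) hne x hx hx'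
    exacts [absurd rfl hne, hpq' x hx hx', hpq' x hx' hx, absurd rfl hne]

theorem IsInternallyDisjoint.map_reverse {S : Finset (G.Path a b)} (hS : IsInternallyDisjoint S) :
    IsInternallyDisjoint (S.map ⟨Path.reverse, Path.reverse_injective⟩) := by
  simp only [IsInternallyDisjoint, Finset.mem_map]
  rintro _ ⟨p, hp, rfl⟩ _ ⟨q, hq, rfl⟩ hne x hxp hxq
  simp only [Function.Embedding.coeFn_mk, Path.reverse_coe, Walk.support_reverse,
    List.mem_reverse] at hne hxp hxq
  exact (hS p hp q hq (by rintro rfl; exact hne rfl) x hxp hxq).symm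

theorem localConn_comm (G : SimpleGraph V) (a b : V) : localConn G a b = localConn G b a := by
  suffices h : ∀ a b : V, localConn G a b ≤ localConn G b a from
    le_antisymm (h a b) (h b a)
  intro a b
  rcases eq_or_ne a b with rfl | hab
  · exact le_rfl
  rw [localConn_of_ne hab]
  refine sSup_le ?_
  rintro _ ⟨S, hS, rfl⟩
  simpa using hS.map_reverse.card_le_localConn hab.symm

theorem localConn_eq_zero_of_not_reachable (h : ¬ G.Reachable a b) : localConn G a b = 0 := by
  have hab : a ≠ b := by
    rintro rfl
    exact h .rfl
  rw [localConn_of_ne hab]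
  refine le_antisymm (sSup_le ?_) zero_le
  rintro _ ⟨S, -, rfl⟩
  rw [Finset.eq_empty_of_forall_notMem (s := S) fun p _ => h ⟨(p : G.Walk a b)⟩]
  simp

theorem one_le_localConn_of_reachable (hab : a ≠ b) (h : G.Reachable a b) :
    1 ≤ localConn G a b := by
  classical
  obtain ⟨W⟩ := h
  rw [← Nat.cast_one, natCast_le_localConn_iff hab]
  refine ⟨{W.toPath}, ?_, by simp⟩
  simp only [IsInternallyDisjoint, Finset.mem_singleton]
  rintro p rfl q rfl hne
  exact absurd rfl hne

end LocalConnectivity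

section Degree

variable {V : Type*} {G : SimpleGraph V} {a b : V}

theorem IsInternallyDisjoint.injOn_snd {S : Finset (G.Path a b)} (hS : IsInternallyDisjoint S)
    (hab : a ≠ b) : Set.InjOn (fun p : G.Path a b => (p : G.Walk a b).snd) S := by
  intro p hp q hq (hpq : (p : G.Walk a b).snd = (q : G.Walk a b).snd)
  by_contra hne
  have hnil : ∀ r : G.Path a b, ¬ (r : G.Walk a b).Nil := fun _ => Walk.not_nil_of_ne hab
  rcases hS p hp q hq hne _ (Walk.getVert_mem_support _ 1)
      (by rw [← Walk.snd, hpq]; exact Walk.getVert_mem_support _ 1) with ha | hb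
  · exact (Walk.adj_snd (hnil p)).ne ha.symm
  -- both paths would be the single edge `ab`
  have hedge : ∀ r : G.Path a b, (r : G.Walk a b).snd = b → s(a, b) ∈ (r : G.Walk a b).edges :=
    fun r hr => by simpa only [hr] using Walk.mk_start_snd_mem_edges (hnil r)
  have hp' := p.2.eq_adj_toWalk_of_mem_edges (hedge p hb)
  have hq' := q.2.eq_adj_toWalk_of_mem_edges (hedge q (hpq ▸ hb))
  exact hne (Subtype.ext (hp'.trans hq'.symm))

variable [Fintype (G.neighborSet a)]

theorem IsInternallyDisjoint.card_le_degree {S : Finset (G.Path a b)}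
    (hS : IsInternallyDisjoint S) (hab : a ≠ b) : S.card ≤ G.degree a := by
  rw [← card_neighborFinset_eq_degree]
  refine Finset.card_le_card_of_injOn _ (fun p _ => ?_) (hS.injOn_snd hab)
  simpa using Walk.adj_snd (Walk.not_nil_of_ne (p := (p : G.Walk a b)) hab)

theorem localConn_le_degree (hab : a ≠ b) : localConn G a b ≤ G.degree a := by
  rw [localConn_of_ne hab]
  refine sSup_le ?_
  rintro _ ⟨S, hS, rfl⟩
  exact_mod_cast hS.card_le_degree hab

theorem localConn_ne_top (hab : a ≠ b) : localConn G a b ≠ ⊤ :=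
  ne_top_of_le_ne_top (ENat.natCast_ne_top _) (localConn_le_degree hab)

theorem IsInternallyDisjoint.exists_snd_eq {S : Finset (G.Path a b)}
    (hS : IsInternallyDisjoint S) (hab : a ≠ b) (hcard : G.degree a ≤ S.card) {y : V}
    (hy : G.Adj a y) : ∃ p ∈ S, (p : G.Walk a b).snd = y := by
  classical
  have himage : S.image (fun p : G.Path a b => (p : G.Walk a b).snd) = G.neighborFinset a := by
    refine Finset.eq_of_subset_of_card_le (fun x hx => ?_) ?_
    · obtain ⟨p, -, rfl⟩ := Finset.mem_image.1 hx
      simpa using Walk.adj_snd (Walk.not_nil_of_ne (p := (p : G.Walk a b)) hab)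
    · rwa [Finset.card_image_of_injOn (hS.injOn_snd hab), card_neighborFinset_eq_degree]
  simpa using himage.ge ((mem_neighborFinset G a y).2 hy)

end Degree

section TwoPaths

variable {V : Type*} {G : SimpleGraph V} {a b c x : V}

theorem two_le_localConn_of_walks (hac : a ≠ c) (W₁ W₂ : G.Walk a c)
    (hW : ∀ y ∈ W₁.support, y ∈ W₂.support → y = a ∨ y = c)
    (hedge : s(a, c) ∉ W₁.edges ∨ s(a, c) ∉ W₂.edges) : 2 ≤ localConn G a c := by
  classical
  refine (two_le_localConn_iff hac).2 ⟨W₁.toPath, W₂.toPath, fun h => ?_, fun y hy₁ hy₂ =>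
    hW y (W₁.support_toPath_subset_support hy₁) (W₂.support_toPath_subset_support hy₂)⟩
  -- two equal bypasses meeting only at their ends form the single edge `ac`
  have hnil : ¬ (W₁.toPath : G.Walk a c).Nil := Walk.not_nil_of_ne hac
  have hsnd : (W₁.toPath : G.Walk a c).snd = c := by
    have hmem := Walk.getVert_mem_support (W₁.toPath : G.Walk a c) 1
    refine (hW _ (W₁.support_toPath_subset_support hmem)
      (W₂.support_toPath_subset_support (h ▸ hmem))).resolve_left (Walk.adj_snd hnil).ne.symm
  have he : s(a, c) ∈ (W₁.toPath : G.Walk a c).edges := by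
    simpa only [hsnd] using Walk.mk_start_snd_mem_edges hnil
  rcases hedge with h₁ | h₂
  · exact h₁ (W₁.edges_toPath_subset_edges he)
  · exact h₂ (W₂.edges_toPath_subset_edges (h ▸ he))

theorem IsInternallyDisjoint.two_le_localConn_of_mem_support {S : Finset (G.Path a b)}
    (hS : IsInternallyDisjoint S) (hS₂ : 2 ≤ S.card) {P : G.Path a b} (hP : P ∈ S)
    (hx : x ∈ (P : G.Walk a b).support) (hxa : x ≠ a) (hxb : x ≠ b) :
    2 ≤ localConn G x b := by
  classical
  obtain ⟨Q, hQ, hQP⟩ := Finset.exists_mem_ne hS₂ P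
  have hxQ : x ∉ (Q : G.Walk a b).support := fun h =>
    (hS P hP Q hQ hQP.symm x hx h).elim hxa hxb
  have hPpath := P.2
  refine two_le_localConn_of_walks hxb ((P : G.Walk a b).dropUntil x hx)
    (((P : G.Walk a b).takeUntil x hx).reverse.append Q) (fun y hyd hy => ?_) (Or.inr ?_)
  · rw [Walk.mem_support_append_iff, Walk.support_reverse, List.mem_reverse] at hy
    rcases hy with hyt | hyQ
    · exact Or.inl (hPpath.eq_of_mem_support_takeUntil_of_mem_support_dropUntil hx hyt hyd)
    · refine Or.inr ((hS P hP Q hQ hQP.symm y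
        ((P : G.Walk a b).support_dropUntil_subset_support hx hyd) hyQ).resolve_left ?_)
      rintro rfl
      exact hxa (hPpath.eq_of_mem_support_takeUntil_of_mem_support_dropUntil hx
        (Walk.start_mem_support _) hyd).symm
  · rw [Walk.edges_append, List.mem_append, Walk.edges_reverse, List.mem_reverse, not_or]
    exact ⟨fun h => Walk.endpoint_notMem_support_takeUntil hPpath hx hxb.symm
        (Walk.snd_mem_support_of_mem_edges _ h),
      fun h => hxQ (Walk.fst_mem_support_of_mem_edges _ h)⟩

theorem IsInternallyDisjoint.two_le_localConn_start_of_mem_support {S : Finset (G.Path a b)}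
    (hS : IsInternallyDisjoint S) (hS₂ : 2 ≤ S.card) {P : G.Path a b} (hP : P ∈ S)
    (hx : x ∈ (P : G.Walk a b).support) (hxa : x ≠ a) (hxb : x ≠ b) :
    2 ≤ localConn G a x := by
  rw [localConn_comm]
  refine hS.map_reverse.two_le_localConn_of_mem_support (by simpa using hS₂)
    (Finset.mem_map_of_mem _ hP) ?_ hxb hxa
  simpa using hx

theorem two_le_localConn_of_card_le {v w u : V} {n : ℕ} (hn : 2 ≤ n) (hvw : v ≠ w)
    (hκ : (n : ℕ∞) ≤ localConn G v w) {C : Finset V} (hC : ∀ x, G.Reachable x w → x ∈ C)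
    (hcard : C.card ≤ n + 1) (hu : G.Reachable u w) (huv : u ≠ v) (huw : u ≠ w) :
    2 ≤ localConn G u w := by
  classical
  obtain ⟨S, hS, hnS⟩ := (natCast_le_localConn_iff hvw n).1 hκ
  have hreach : ∀ p : G.Path v w, ∀ x ∈ (p : G.Walk v w).support, G.Reachable x w :=
    fun p x hx => ⟨(p : G.Walk v w).dropUntil x hx⟩
  have hv : v ∈ C := by
    obtain ⟨P, -⟩ := Finset.card_pos.1 (by omega : 0 < S.card)
    exact hC v (hreach P v (Walk.start_mem_support _))
  -- the second vertices of the `≥ n` paths fill up all of `C \ {v}`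
  have himage : S.image (fun p : G.Path v w => (p : G.Walk v w).snd) = C.erase v := by
    refine Finset.eq_of_subset_of_card_le (fun x hx => ?_) ?_
    · obtain ⟨p, -, rfl⟩ := Finset.mem_image.1 hx
      exact Finset.mem_erase.2 ⟨(Walk.adj_snd (Walk.not_nil_of_ne hvw)).ne.symm,
        hC _ (hreach p _ (Walk.getVert_mem_support _ 1))⟩
    · rw [Finset.card_erase_of_mem hv, Finset.card_image_of_injOn (hS.injOn_snd hvw)]
      omega
  obtain ⟨p, hp, rfl⟩ := Finset.mem_image.1 (himage ▸ Finset.mem_erase.2 ⟨huv, hC u hu⟩)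
  exact hS.two_le_localConn_of_mem_support (hn.trans hnS) hp (Walk.getVert_mem_support _ 1)
    huv huw

end TwoPaths

section Surgery

variable {V : Type*} {G : SimpleGraph V} {a b c : V}

def pathsSupport (S : Finset (G.Path a b)) : Set V :=
  {x | ∃ p ∈ S, x ∈ (p : G.Walk a b).support}

theorem mem_pathsSupport {S : Finset (G.Path a b)} {P : G.Path a b} (hP : P ∈ S) {y : V}
    (hy : y ∈ (P : G.Walk a b).support) : y ∈ pathsSupport S :=
  ⟨P, hP, hy⟩

section FirstHits

variable [DecidableEq V] {S : Finset (G.Path a b)}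

theorem IsInternallyDisjoint.two_le_localConn_of_hits_on_ne (hS : IsInternallyDisjoint S)
    (hc : c ∉ pathsSupport S) {P₁ P₂ : G.Path a b} (hP₁ : P₁ ∈ S) (hP₂ : P₂ ∈ S) (hP : P₁ ≠ P₂)
    {x₁ x₂ : V} (hx₁ : x₁ ∈ (P₁ : G.Walk a b).support) (hx₂ : x₂ ∈ (P₂ : G.Walk a b).support)
    (hx₁b : x₁ ≠ b) (hx₂b : x₂ ≠ b) (hx : x₁ ≠ x₂) (W₁ : G.Walk c x₁) (W₂ : G.Walk c x₂)
    (hW₁ : ∀ y ∈ W₁.support, y ∈ pathsSupport S → y = x₁)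
    (hW₂ : ∀ y ∈ W₂.support, y ∈ pathsSupport S → y = x₂)
    (hW : ∀ y ∈ W₁.support, y ∈ W₂.support → y = c) : 2 ≤ localConn G a c := by
  have hac : a ≠ c := fun h => hc (mem_pathsSupport hP₁ (h ▸ Walk.start_mem_support _))
  set t₁ := (P₁ : G.Walk a b).takeUntil x₁ hx₁
  set t₂ := (P₂ : G.Walk a b).takeUntil x₂ hx₂
  have ht₁ : ∀ y ∈ t₁.support, y ∈ (P₁ : G.Walk a b).support :=
    fun _ hy => Walk.support_takeUntil_subset_support _ _ hy
  have ht₂ : ∀ y ∈ t₂.support, y ∈ (P₂ : G.Walk a b).support :=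
    fun _ hy => Walk.support_takeUntil_subset_support _ _ hy
  refine two_le_localConn_of_walks hac (t₁.append W₁.reverse) (t₂.append W₂.reverse)
    (fun y hy₁ hy₂ => ?_) ?_
  · simp only [Walk.mem_support_append_iff, Walk.support_reverse, List.mem_reverse] at hy₁ hy₂
    rcases hy₁ with h₁ | h₁ <;> rcases hy₂ with h₂ | h₂
    · refine Or.inl ((hS P₁ hP₁ P₂ hP₂ hP y (ht₁ y h₁) (ht₂ y h₂)).resolve_right ?_)
      rintro rfl
      exact Walk.endpoint_notMem_support_takeUntil P₁.2 hx₁ hx₁b.symm h₁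
    · obtain hy := hW₂ y h₂ (mem_pathsSupport hP₁ (ht₁ y h₁))
      rw [hy] at h₁ ⊢
      exact Or.inl ((hS P₁ hP₁ P₂ hP₂ hP x₂ (ht₁ x₂ h₁) hx₂).resolve_right hx₂b)
    · obtain hy := hW₁ y h₁ (mem_pathsSupport hP₂ (ht₂ y h₂))
      rw [hy] at h₂ ⊢
      exact Or.inl ((hS P₁ hP₁ P₂ hP₂ hP x₁ hx₁ (ht₂ x₁ h₂)).resolve_right hx₁b)
    · exact Or.inr (hW y h₁ h₂)
  · -- an edge `ac` on either walk would force that walk's hit to be `a`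
    refine not_and_or.1 fun ⟨h₁, h₂⟩ => hx ?_
    have e₁ := hW₁ a (Walk.mem_support_of_mk_mem_edges_takeUntil_append hx₁ W₁
      (fun h => hc (mem_pathsSupport hP₁ h)) h₁) (mem_pathsSupport hP₁ (Walk.start_mem_support _))
    have e₂ := hW₂ a (Walk.mem_support_of_mk_mem_edges_takeUntil_append hx₂ W₂
      (fun h => hc (mem_pathsSupport hP₂ h)) h₂) (mem_pathsSupport hP₂ (Walk.start_mem_support _))
    exact e₁.symm.trans e₂

theorem IsInternallyDisjoint.two_le_localConn_of_hits_on_eq (hS : IsInternallyDisjoint S)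
    (hc : c ∉ pathsSupport S) {P Q : G.Path a b} (hP : P ∈ S) (hQ : Q ∈ S) (hPQ : P ≠ Q)
    {x₁ x₂ : V} (hx₁ : x₁ ∈ (P : G.Walk a b).support)
    (hx₂ : x₂ ∈ ((P : G.Walk a b).dropUntil x₁ hx₁).support)
    (hx₁a : x₁ ≠ a) (hx₁b : x₁ ≠ b) (hx : x₁ ≠ x₂) (W₁ : G.Walk c x₁) (W₂ : G.Walk c x₂)
    (hW₁ : ∀ y ∈ W₁.support, y ∈ pathsSupport S → y = x₁)
    (hW₂ : ∀ y ∈ W₂.support, y ∈ pathsSupport S → y = x₂)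
    (hW : ∀ y ∈ W₁.support, y ∈ W₂.support → y = c) : 2 ≤ localConn G a c := by
  have hac : a ≠ c := fun h => hc (mem_pathsSupport hP (h ▸ Walk.start_mem_support _))
  set t := (P : G.Walk a b).takeUntil x₁ hx₁
  set d := (P : G.Walk a b).dropUntil x₁ hx₁
  set e := d.dropUntil x₂ hx₂
  have ht : ∀ y ∈ t.support, y ∈ (P : G.Walk a b).support :=
    fun _ hy => Walk.support_takeUntil_subset_support _ _ hy
  have hd : ∀ y ∈ d.support, y ∈ (P : G.Walk a b).support :=
    fun _ hy => Walk.support_dropUntil_subset_support _ _ hy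
  have he : ∀ y ∈ e.support, y ∈ d.support :=
    fun _ hy => Walk.support_dropUntil_subset_support _ _ hy
  have htd : ∀ y ∈ t.support, y ∈ d.support → y = x₁ :=
    fun _ => P.2.eq_of_mem_support_takeUntil_of_mem_support_dropUntil hx₁
  have hx₁e : x₁ ∉ e.support := fun h =>
    hx ((P.2.dropUntil hx₁).eq_of_mem_support_takeUntil_of_mem_support_dropUntil hx₂
      (Walk.start_mem_support _) h)
  -- the second walk runs `a → b` along `Q`, then back along `P` from `b` to `x₂`
  refine two_le_localConn_of_walks hac (t.append W₁.reverse)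
    ((Q : G.Walk a b).append (e.reverse.append W₂.reverse)) (fun y hy₁ hy₂ => ?_) (Or.inl ?_)
  · simp only [Walk.mem_support_append_iff, Walk.support_reverse, List.mem_reverse] at hy₁ hy₂
    rcases hy₁ with h₁ | h₁ <;> rcases hy₂ with h₂ | h₂ | h₂
    · refine Or.inl ((hS P hP Q hQ hPQ y (ht y h₁) h₂).resolve_right ?_)
      rintro rfl
      exact Walk.endpoint_notMem_support_takeUntil P.2 hx₁ hx₁b.symm h₁
    · exact absurd (htd y h₁ (he y h₂) ▸ h₂) hx₁e
    · rw [hW₂ y h₂ (mem_pathsSupport hP (ht y h₁))] at h₁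
      exact absurd (htd x₂ h₁ hx₂) hx.symm
    · rw [hW₁ y h₁ (mem_pathsSupport hQ h₂)] at h₂
      exact ((hS P hP Q hQ hPQ x₁ hx₁ h₂).elim hx₁a hx₁b).elim
    · rw [hW₁ y h₁ (mem_pathsSupport hP (hd y (he y h₂)))] at h₂
      exact absurd h₂ hx₁e
    · exact Or.inr (hW y h₁ h₂)
  · intro h
    have ha := Walk.mem_support_of_mk_mem_edges_takeUntil_append hx₁ W₁
      (fun h => hc (mem_pathsSupport hP h)) h
    exact hx₁a (hW₁ a ha (mem_pathsSupport hP (Walk.start_mem_support _))).symm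

theorem IsInternallyDisjoint.two_le_localConn_of_hits (hS : IsInternallyDisjoint S)
    (hS₂ : 2 ≤ S.card) (hc : c ∉ pathsSupport S) {x₁ x₂ : V} (hx₁ : x₁ ∈ pathsSupport S)
    (hx₂ : x₂ ∈ pathsSupport S) (hx₁b : x₁ ≠ b) (hx₂b : x₂ ≠ b) (hx : x₁ ≠ x₂)
    (W₁ : G.Walk c x₁) (W₂ : G.Walk c x₂)
    (hW₁ : ∀ y ∈ W₁.support, y ∈ pathsSupport S → y = x₁)
    (hW₂ : ∀ y ∈ W₂.support, y ∈ pathsSupport S → y = x₂)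
    (hW : ∀ y ∈ W₁.support, y ∈ W₂.support → y = c) : 2 ≤ localConn G a c := by
  by_cases h : ∃ P₁ ∈ S, ∃ P₂ ∈ S, P₁ ≠ P₂ ∧
      x₁ ∈ (P₁ : G.Walk a b).support ∧ x₂ ∈ (P₂ : G.Walk a b).support
  · obtain ⟨P₁, hP₁, P₂, hP₂, hP, h₁, h₂⟩ := h
    exact hS.two_le_localConn_of_hits_on_ne hc hP₁ hP₂ hP h₁ h₂ hx₁b hx₂b hx W₁ W₂ hW₁ hW₂ hW
  -- otherwise both hits lie on one path `P` only, so neither of them is `a`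
  push Not at h
  obtain ⟨P, hP, h₁⟩ := hx₁
  obtain ⟨P', hP', h₂⟩ := hx₂
  obtain rfl : P' = P := by_contra fun hne => h P hP P' hP' (Ne.symm hne) h₁ h₂
  obtain ⟨Q, hQ, hQP⟩ := Finset.exists_mem_ne hS₂ P'
  have hx₁a : x₁ ≠ a := by
    rintro rfl
    exact h Q hQ P' hP' hQP (Walk.start_mem_support _) h₂
  have hx₂a : x₂ ≠ a := by
    rintro rfl
    exact h P' hP' Q hQ hQP.symm h₁ (Walk.start_mem_support _)
  rcases Walk.mem_support_dropUntil_or _ h₁ h₂ with hord | hord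
  · exact hS.two_le_localConn_of_hits_on_eq hc hP' hQ hQP.symm h₁ hord hx₁a hx₁b hx
      W₁ W₂ hW₁ hW₂ hW
  · exact hS.two_le_localConn_of_hits_on_eq hc hP' hQ hQP.symm h₂ hord hx₂a hx₂b hx.symm
      W₂ W₁ hW₂ hW₁ fun y h₂ h₁ => hW y h₁ h₂

theorem IsInternallyDisjoint.two_le_localConn_of_forall_adj (hS : IsInternallyDisjoint S)
    (hS₂ : 2 ≤ S.card) (hcover : ∀ y, G.Adj b y → y ∈ pathsSupport S) (hac : a ≠ c)
    (hbc : b ≠ c) (h : 2 ≤ localConn G b c) : 2 ≤ localConn G a c := by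
  by_cases hc : c ∈ pathsSupport S
  · obtain ⟨P, hP, hcP⟩ := hc
    exact hS.two_le_localConn_start_of_mem_support hS₂ hP hcP hac.symm hbc.symm
  obtain ⟨q₁, q₂, -, hq⟩ := (two_le_localConn_iff hbc).1 h
  have hb : b ∈ pathsSupport S := by
    obtain ⟨P, hP⟩ := Finset.card_pos.1 (by omega : 0 < S.card)
    exact mem_pathsSupport hP (Walk.end_mem_support _)
  -- follow `q₁` and `q₂` backwards from `c` until they first meet the paths of `S`
  obtain ⟨x₁, hx₁, W₁, hW₁q, hW₁⟩ :=
    (q₁ : G.Walk b c).reverse.exists_walk_support_subset_first_mem hb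
  obtain ⟨x₂, hx₂, W₂, hW₂q, hW₂⟩ :=
    (q₂ : G.Walk b c).reverse.exists_walk_support_subset_first_mem hb
  have hne_b : ∀ {x} (W : G.Walk c x), (∀ y ∈ W.support, y ∈ pathsSupport S → y = x) →
      x ≠ b := by
    rintro x W hW rfl
    have hadj := Walk.adj_penultimate (Walk.not_nil_of_ne hbc.symm : ¬ W.Nil)
    exact hadj.ne (hW _ (Walk.getVert_mem_support _ _) (hcover _ hadj.symm))
  have hW : ∀ y ∈ W₁.support, y ∈ W₂.support → y = c := by
    intro y h₁ h₂
    refine (hq y (by simpa using hW₁q h₁) (by simpa using hW₂q h₂)).resolve_left ?_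
    rintro rfl
    exact hne_b W₁ hW₁ (hW₁ _ h₁ hb).symm
  refine hS.two_le_localConn_of_hits hS₂ hc hx₁ hx₂ (hne_b W₁ hW₁) (hne_b W₂ hW₂) ?_
    W₁ W₂ hW₁ hW₂ hW
  intro hx
  have hx₁W₂ : x₁ ∈ W₂.support := hx ▸ W₂.end_mem_support
  exact hc (hW x₁ W₁.end_mem_support hx₁W₂ ▸ hx₁)

end FirstHits

theorem two_le_localConn_of_degree_le [Fintype (G.neighborSet b)] (hab : a ≠ b) (hac : a ≠ c)
    (hbc : b ≠ c) (hdeg : (G.degree b : ℕ∞) ≤ localConn G a b) (h : 2 ≤ localConn G b c) :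
    2 ≤ localConn G a c := by
  classical
  obtain ⟨S, hS, hcard⟩ := (natCast_le_localConn_iff hab _).1 hdeg
  have h₂ : 2 ≤ G.degree b := by exact_mod_cast h.trans (localConn_le_degree hbc)
  refine hS.two_le_localConn_of_forall_adj (h₂.trans hcard) (fun y hy => ?_) hac hbc h
  obtain ⟨p, hp, hpy⟩ := hS.map_reverse.exists_snd_eq hab.symm (by simpa using hcard) hy
  obtain ⟨q, hq, rfl⟩ := Finset.mem_map.1 hp
  refine ⟨q, hq, ?_⟩
  rw [← hpy]
  simp

end Surgery

section Counting

variable {V : Type*} [Fintype V] {G : SimpleGraph V} [DecidableRel G.Adj]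

theorem localConn_ne_one_of_localConn_eq_maxDegree (hΔ : 2 ≤ G.maxDegree) {v v' w w' : V}
    (hvw : v ≠ w) (hvw' : v ≠ w') (hv'w : v' ≠ w) (hv'w' : v' ≠ w') (hww' : w ≠ w')
    (hv : localConn G v w = G.maxDegree) (hv' : localConn G v w' = G.maxDegree)
    (hκ : localConn G v' w = G.maxDegree) : localConn G v' w' ≠ 1 := by
  have hdeg : ∀ x, (G.degree x : ℕ∞) ≤ G.maxDegree := fun x => by
    exact_mod_cast G.degree_le_maxDegree x
  by_cases h : 2 ≤ localConn G w w'
  · refine ne_of_gt (lt_of_lt_of_le ?_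
      (two_le_localConn_of_degree_le hv'w hv'w' hww' (hκ ▸ hdeg w) h))
    norm_num
  · refine absurd (two_le_localConn_of_degree_le hvw.symm hww' hvw' ?_ ?_) h
    · rw [localConn_comm, hv]
      exact hdeg v
    · rw [hv']
      exact_mod_cast hΔ

theorem localConn_toNat_mem_Icc {v w : V} (hvw : v ≠ w) (h : G.Reachable v w) :
    (localConn G v w).toNat ∈ Finset.Icc 1 G.maxDegree := by
  have hκ := ENat.natCast_toNat (localConn_ne_top (G := G) hvw)
  have h₁ := hκ ▸ one_le_localConn_of_reachable hvw h
  have h₂ : localConn G v w ≤ G.maxDegree := (localConn_le_degree hvw).trans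
    (by exact_mod_cast G.degree_le_maxDegree v)
  rw [← hκ] at h₂
  exact Finset.mem_Icc.2 ⟨by exact_mod_cast h₁, by exact_mod_cast h₂⟩

variable [DecidableEq V]

theorem injOn_localConn_toNat {B : Finset V} (hB : ConnResolving G B) (w : V) :
    Set.InjOn (fun v (x : ({x ∈ B | G.Reachable x w} : Finset V)) => (localConn G v x).toNat)
      ({v ∈ Bᶜ | G.Reachable v w} : Finset V) := by
  intro u hu v hv huv
  simp only [Finset.coe_filter, Finset.mem_compl, Set.mem_ofPred_eq] at hu hv
  refine hB u v fun x hx => ?_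
  by_cases hxw : G.Reachable x w
  · have hux : u ≠ x := fun h => hu.1 (h ▸ hx)
    have hvx : v ≠ x := fun h => hv.1 (h ▸ hx)
    rw [← ENat.natCast_toNat (localConn_ne_top hux), ← ENat.natCast_toNat (localConn_ne_top hvx)]
    exact congrArg Nat.cast (congrFun huv ⟨x, Finset.mem_filter.2 ⟨hx, hxw⟩⟩)
  · rw [localConn_eq_zero_of_not_reachable fun h => hxw (h.symm.trans hu.2),
      localConn_eq_zero_of_not_reachable fun h => hxw (h.symm.trans hv.2)]

theorem localConn_toNat_mem_piFinset {B : Finset V} {w v : V}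
    (hv : v ∈ ({v ∈ Bᶜ | G.Reachable v w} : Finset V)) :
    (fun x : ({x ∈ B | G.Reachable x w} : Finset V) => (localConn G v x).toNat) ∈
      Fintype.piFinset fun _ => Finset.Icc 1 G.maxDegree := by
  refine Fintype.mem_piFinset.2 fun x => ?_
  have hx := Finset.mem_filter.1 x.2
  have hv := Finset.mem_filter.1 hv
  exact localConn_toNat_mem_Icc (fun h => Finset.mem_compl.1 hv.1 (h ▸ hx.1))
    (hv.2.trans hx.2.symm)

theorem card_compl_filter_reachable_le {B : Finset V} (hB : ConnResolving G B) (w : V) :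
    {v ∈ Bᶜ | G.Reachable v w}.card ≤ G.maxDegree ^ {x ∈ B | G.Reachable x w}.card := by
  have h := Finset.card_le_card_of_injOn _ (fun _ hv => localConn_toNat_mem_piFinset hv)
    (injOn_localConn_toNat hB w)
  simpa using h

theorem exists_forall_localConn_eq_of_card_eq {B : Finset V} (hB : ConnResolving G B) (w : V)
    (heq : {v ∈ Bᶜ | G.Reachable v w}.card = G.maxDegree ^ {x ∈ B | G.Reachable x w}.card)
    {g : V → ℕ} (hg : ∀ x ∈ B, G.Reachable x w → g x ∈ Finset.Icc 1 G.maxDegree) :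
    ∃ v ∈ ({v ∈ Bᶜ | G.Reachable v w} : Finset V), ∀ x ∈ B, G.Reachable x w →
      localConn G v x = g x := by
  obtain ⟨v, hv, hgv⟩ := Finset.surj_on_of_inj_on_of_card_le _
    (fun _ hv => localConn_toNat_mem_piFinset hv)
    (fun _ _ h₁ h₂ h => injOn_localConn_toNat hB w h₁ h₂ h) (by simp [heq]) (fun x => g x)
    (Fintype.mem_piFinset.2 fun x => hg x (Finset.mem_filter.1 x.2).1 (Finset.mem_filter.1 x.2).2)
  refine ⟨v, hv, fun x hx hxw => ?_⟩
  have hvx : v ≠ x := fun h => (Finset.mem_compl.1 (Finset.mem_filter.1 hv).1) (h ▸ hx)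
  rw [← ENat.natCast_toNat (localConn_ne_top hvx)]
  exact congrArg Nat.cast (congrFun hgv ⟨x, Finset.mem_filter.2 ⟨hx, hxw⟩⟩).symm

theorem card_compl_filter_reachable_lt (hΔ : 2 ≤ G.maxDegree) {B : Finset V}
    (hB : ConnResolving G B) {w : V} (hw : w ∈ B) :
    {v ∈ Bᶜ | G.Reachable v w}.card < G.maxDegree ^ {x ∈ B | G.Reachable x w}.card := by
  have hle := card_compl_filter_reachable_le hB w
  set Δ := G.maxDegree
  set BK := {x ∈ B | G.Reachable x w}
  set PK := {v ∈ Bᶜ | G.Reachable v w}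
  have hPK : ∀ v ∈ PK, ∀ x ∈ BK, v ≠ x ∧ G.Reachable v x := by
    intro v hv x hx
    simp only [BK, PK, Finset.mem_filter, Finset.mem_compl] at hv hx
    exact ⟨fun h => hv.1 (h ▸ hx.1), hv.2.trans hx.2.symm⟩
  refine hle.lt_of_ne fun heq => ?_
  have hall : ∀ g : V → ℕ, (∀ x ∈ BK, g x ∈ Finset.Icc 1 Δ) →
      ∃ v ∈ PK, ∀ x ∈ BK, localConn G v x = g x := fun g hg => by
    obtain ⟨v, hv, hgv⟩ := exists_forall_localConn_eq_of_card_eq hB w heq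
      fun x hx hxw => hg x (Finset.mem_filter.2 ⟨hx, hxw⟩)
    exact ⟨v, hv, fun x hx => hgv x (Finset.mem_filter.1 hx).1 (Finset.mem_filter.1 hx).2⟩
  have hwK : w ∈ BK := Finset.mem_filter.2 ⟨hw, .rfl⟩
  obtain ⟨vΔ, hvΔ, hκΔ⟩ := hall (fun _ => Δ) fun _ _ => Finset.mem_Icc.2 ⟨by omega, le_rfl⟩
  rcases (Finset.one_le_card.2 ⟨w, hwK⟩).eq_or_lt with hs | hs
  · obtain ⟨v₁, hv₁, hκ₁⟩ := hall (fun _ => 1) fun _ _ => Finset.mem_Icc.2 ⟨le_rfl, by omega⟩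
    have hC : ∀ x, G.Reachable x w → x ∈ BK ∪ PK := fun x hx => by
      by_cases hxB : x ∈ B <;> simp [BK, PK, hxB, hx]
    have hcard : (BK ∪ PK).card ≤ Δ + 1 :=
      Finset.card_union_le _ _ |>.trans (by rw [← hs, pow_one] at hle; omega)
    have hv₁Δ : v₁ ≠ vΔ := by
      rintro rfl
      have h := (hκ₁ w hwK).symm.trans (hκΔ w hwK)
      norm_cast at h
      omega
    have h := two_le_localConn_of_card_le hΔ (hPK vΔ hvΔ w hwK).1 (hκΔ w hwK).ge hC hcard
      (hPK v₁ hv₁ w hwK).2 hv₁Δ (hPK v₁ hv₁ w hwK).1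
    rw [hκ₁ w hwK] at h
    norm_num at h
  · obtain ⟨w', hw', hw'w⟩ := Finset.exists_mem_ne hs w
    obtain ⟨v, hv, hκ⟩ := hall (fun x => if x = w then Δ else 1) fun x _ => by
      split_ifs <;> simp <;> omega
    refine localConn_ne_one_of_localConn_eq_maxDegree hΔ (hPK vΔ hvΔ w hwK).1
      (hPK vΔ hvΔ w' hw').1 (hPK v hv w hwK).1 (hPK v hv w' hw').1 hw'w.symm (hκΔ w hwK)
      (hκΔ w' hw') (by simpa using hκ w hwK) (by simpa [hw'w] using hκ w' hw')

theorem card_le_card_add_maxDegree_pow (hΔ : 2 ≤ G.maxDegree) {B : Finset V}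
    (hB : ConnResolving G B) : Fintype.card V ≤ B.card + G.maxDegree ^ B.card := by
  classical
  set f := G.connectedComponentMk
  set t := B.image f
  -- outside the components meeting `B` every vertex has connectivity `0` to all of `B`
  have hout : {v ∈ Bᶜ | f v ∉ t}.card ≤ 1 := by
    refine Finset.card_le_one.2 fun u hu v hv => hB u v fun x hx => ?_
    have hnr : ∀ u ∈ {v ∈ Bᶜ | f v ∉ t}, ¬ G.Reachable u x := fun u hu hr =>
      (Finset.mem_filter.1 hu).2 (Finset.mem_image.2 ⟨x, hx, (ConnectedComponent.sound hr).symm⟩)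
    rw [localConn_eq_zero_of_not_reachable (hnr u hu),
      localConn_eq_zero_of_not_reachable (hnr v hv)]
  have hin : {v ∈ Bᶜ | f v ∈ t}.card = ∑ K ∈ t, {v ∈ Bᶜ | f v = K}.card := by
    rw [Finset.card_eq_sum_card_fiberwise (s := {v ∈ Bᶜ | f v ∈ t}) (t := t) (f := f)
      fun v hv => (Finset.mem_filter.1 (Finset.mem_coe.1 hv)).2]
    refine Finset.sum_congr rfl fun K hK => ?_
    rw [Finset.filter_filter]
    exact congrArg _ (Finset.filter_congr fun v _ => ⟨And.right, fun h => ⟨h ▸ hK, h⟩⟩)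
  have hcomp : ∀ K ∈ t,
      {v ∈ Bᶜ | f v = K}.card + 1 ≤ G.maxDegree ^ {x ∈ B | f x = K}.card := by
    intro K hK
    obtain ⟨w, hw, rfl⟩ := Finset.mem_image.1 hK
    have hfiber : ∀ s : Finset V, {v ∈ s | f v = f w} = {v ∈ s | G.Reachable v w} :=
      fun s => Finset.filter_congr fun v _ => ConnectedComponent.eq
    rw [hfiber, hfiber]
    exact card_compl_filter_reachable_lt hΔ hB hw
  have hsum : ∑ K ∈ t, {x ∈ B | f x = K}.card = B.card :=
    (Finset.card_eq_sum_card_fiberwise fun x hx => Finset.mem_image_of_mem f hx).symm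
  calc Fintype.card V = B.card + ({v ∈ Bᶜ | f v ∈ t}.card + {v ∈ Bᶜ | f v ∉ t}.card) := by
        rw [Finset.card_filter_add_card_filter_not, Finset.card_add_card_compl]
    _ ≤ B.card + (∑ K ∈ t, {v ∈ Bᶜ | f v = K}.card + 1) := by
        rw [hin]
        omega
    _ ≤ B.card + ∏ K ∈ t, ({v ∈ Bᶜ | f v = K}.card + 1) := by
        gcongr
        exact Finset.sum_add_one_le_prod_add_one _ _
    _ ≤ B.card + ∏ K ∈ t, G.maxDegree ^ {x ∈ B | f x = K}.card := by
        gcongr with K hK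
        exact hcomp K hK
    _ = B.card + G.maxDegree ^ B.card := by
        rw [Finset.prod_pow_eq_pow_sum, hsum]

end Counting

theorem connResolving_univ {V : Type*} (G : SimpleGraph V) [G.LocallyFinite] :
    ConnResolving G Set.univ := fun u v h => by
  by_contra huv
  exact localConn_ne_top huv ((h v trivial).trans (localConn_self G v))

theorem exists_connResolving_ncard_eq_cdim {V : Type*} (G : SimpleGraph V) [G.LocallyFinite] :
    ∃ W : Set V, ConnResolving G W ∧ W.ncard = cdim G :=
  Nat.sInf_mem (s := {n | ∃ W : Set V, ConnResolving G W ∧ W.ncard = n})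
    ⟨_, Set.univ, connResolving_univ G, rfl⟩

theorem logb_le_of_le_add_pow {n k Δ : ℕ} (hΔ : 2 ≤ Δ) (h : n ≤ k + Δ ^ k) :
    Real.logb Δ ((n + 1) / 2) ≤ k := by
  have h₂ : n + 1 ≤ Δ ^ k * 2 := by
    have := Nat.lt_two_pow_self (n := k)
    have := Nat.pow_le_pow_left hΔ k
    omega
  rw [Real.logb_le_iff_le_rpow (by exact_mod_cast hΔ) (by positivity), Real.rpow_natCast,
    div_le_iff₀ two_pos]
  exact_mod_cast h₂

/-- for a graph with maximum degree `Δ ≥ 2`,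
`n ≤ cdim G + Δ ^ cdim G`, and consequently `log_Δ ((n+1)/2) ≤ cdim G`. -/
theorem stmt3 {V : Type*} [Fintype V] (G : SimpleGraph V) [DecidableRel G.Adj]
    (hΔ : 2 ≤ G.maxDegree) :
    Fintype.card V ≤ cdim G + G.maxDegree ^ cdim G ∧
    Real.logb (G.maxDegree : ℝ) (((Fintype.card V : ℝ) + 1) / 2) ≤ (cdim G : ℝ) := by
  classical
  obtain ⟨W, hW, hcard⟩ := exists_connResolving_ncard_eq_cdim G
  have h := card_le_card_add_maxDegree_pow hΔ (B := W.toFinset) (by simpa using hW)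
  rw [← Set.ncard_eq_toFinset_card', hcard] at h
  exact ⟨h, logb_le_of_le_add_pow hΔ h⟩

end ConnDim
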